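/- For every M > 0 there exist vectors Z₁, Z₂, Z₃ ∈ ℝ⁴ such that all three pairwise inner products satisfy Z₁ᵀZ₂ > M, Z₁ᵀZ₃ > M, Z₂ᵀZ₃ > M, while the sign-adjusted high-order concordance satisfies f(Z₁, Z₂, Z₃) = 0. (For instance, with t = 3^{1/3} s, the vectors Z₁ = (t, s, s, −s), Z₂ = (t, s, −s, s), Z₃ = (t, −s, s, s) have all pairwise inner products equal to (3^{2/3} − 1)s² and f(Z₁, Z₂, Z₃) = 0.) -/
import Mathlib


open Finset

/-- Sign-consistency indicator `ψ_k`. -/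
noncomputable def signConsistency {m r : ℕ} (Z : Fin m → Fin r → ℝ) (k : Fin r) : ℝ :=
  if (∀ l, 0 ≤ Z l k) ∨ (∀ l, Z l k < 0) then 1 else -1

/-- The sign-adjusted high-order concordance
`f(Z₁, …, Z_m) = Σ_{k=1}^r ψ_k |Z_{1k} Z_{2k} ⋯ Z_{mk}|`. -/
noncomputable def highOrderConcordance {m r : ℕ} (Z : Fin m → Fin r → ℝ) : ℝ :=
  ∑ k : Fin r, signConsistency Z k * |∏ l : Fin m, Z l k|

/-- for every `M > 0` there exist `Z₁, Z₂, Z₃ ∈ ℝ⁴` whose pairwise inner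
products all exceed `M` while the sign-adjusted high-order concordance
`f(Z₁, Z₂, Z₃)` is zero: large pairwise concordance does not imply large joint
concordance. -/
theorem exists_large_pairwise_zero_joint_concordance (M : ℝ) (hM : 0 < M) :
    ∃ Z : Fin 3 → Fin 4 → ℝ,
      (∑ k : Fin 4, Z 0 k * Z 1 k > M) ∧
      (∑ k : Fin 4, Z 0 k * Z 2 k > M) ∧
      (∑ k : Fin 4, Z 1 k * Z 2 k > M) ∧
      highOrderConcordance Z = 0 := by
  set c : ℝ := (3 : ℝ) ^ ((1 : ℝ)/3) with hc
  have hc0 : 0 < c := Real.rpow_pos_of_pos (by norm_num) _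
  have hc3 : c ^ 3 = 3 := by
    rw [hc, ← Real.rpow_natCast ((3:ℝ) ^ ((1:ℝ)/3)) 3, ← Real.rpow_mul (by norm_num)]
    norm_num
  set s : ℝ := Real.sqrt M + 1 with hs
  have hs0 : 0 < s := by positivity
  have hsM : M < s ^ 2 := by
    have h1 : Real.sqrt M ^ 2 = M := Real.sq_sqrt hM.le
    have h2 : 0 ≤ Real.sqrt M := Real.sqrt_nonneg M
    nlinarith
  have hc2 : 2 < c ^ 2 := by nlinarith [sq_nonneg (c - 2), sq_nonneg c, hc0]
  set t : ℝ := c * s with ht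
  have ht0 : 0 < t := by positivity
  have hts : t * t = c ^ 2 * s ^ 2 := by ring
  refine ⟨![![t, s, s, -s], ![t, s, -s, s], ![t, -s, s, s]], ?_, ?_, ?_, ?_⟩
  · show M < ∑ k : Fin 4, _
    simp only [Fin.sum_univ_four, Matrix.cons_val_zero, Matrix.cons_val_one, Matrix.head_cons,
      Matrix.cons_val_two, Matrix.tail_cons, Matrix.cons_val_three]
    nlinarith [mul_pos hs0 hs0]
  · show M < ∑ k : Fin 4, _
    simp only [Fin.sum_univ_four, Matrix.cons_val_zero, Matrix.cons_val_one, Matrix.head_cons,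
      Matrix.cons_val_two, Matrix.tail_cons, Matrix.cons_val_three]
    nlinarith [mul_pos hs0 hs0]
  · show M < ∑ k : Fin 4, _
    simp only [Fin.sum_univ_four, Matrix.cons_val_zero, Matrix.cons_val_one, Matrix.head_cons,
      Matrix.cons_val_two, Matrix.tail_cons, Matrix.cons_val_three]
    nlinarith [mul_pos hs0 hs0]
  · unfold highOrderConcordance signConsistency
    simp only [Fin.sum_univ_four, Fin.prod_univ_three, Matrix.cons_val_zero, Matrix.cons_val_one,
      Matrix.head_cons, Matrix.cons_val_two, Matrix.tail_cons, Matrix.cons_val_three]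
    rw [if_pos, if_neg, if_neg, if_neg]
    · rw [abs_of_nonneg (by positivity : (0:ℝ) ≤ t * t * t)]
      have h1 : |s * s * -s| = s^3 := by rw [abs_of_nonpos (by nlinarith)]; ring
      have h2 : |s * -s * s| = s^3 := by rw [abs_of_nonpos (by nlinarith)]; ring
      have h3 : |(-s) * s * s| = s^3 := by rw [abs_of_nonpos (by nlinarith)]; ring
      rw [h1, h2, h3]
      have : t * t * t = 3 * s^3 := by
        rw [ht, show c * s * (c * s) * (c * s) = c ^ 3 * s ^ 3 from by ring, hc3]
      rw [this]; ring
    · push_neg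
      exact ⟨⟨0, by show (-s:ℝ) < 0; linarith⟩, ⟨1, by show (0:ℝ) ≤ s; linarith⟩⟩
    · push_neg
      exact ⟨⟨1, by show (-s:ℝ) < 0; linarith⟩, ⟨0, by show (0:ℝ) ≤ s; linarith⟩⟩
    · push_neg
      exact ⟨⟨2, by show (-s:ℝ) < 0; linarith⟩, ⟨0, by show (0:ℝ) ≤ s; linarith⟩⟩
    · left; intro l; fin_cases l <;> (show (0:ℝ) ≤ t) <;> positivity
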